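/- arXiv:1909.02911 — 3 statements merged into one kernel-verified Lean document; each statement's English description precedes it below -/
import Mathlib

section
/- There do not exist: a graphon W₁ on [0,1] with increasing degree function D₁, a probability space (Ω,μ), and measure-preserving maps φ, ψ : Ω → [0,1] such that W(φ(x),φ(y)) = W₁(ψ(x),ψ(y)) for μ²-a.e. (x,y), where W(x,y) = 4xy on (0,1/2)², = 1/2 when x+y > 3/2, = 0 otherwise. -/
/-!
Pulling back along measure-preserving maps preserves the degree `D(x) = ∫ W(x,y) dy` and the
two-path density `E(x) = ∫ W(x,y) D(y) dy` pointwise almost everywhere, so the pair `(D, E)` has the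
same distribution for `W` and for `W₁`. The degree of `W` is uniformly distributed on `[0, 1/4]`,
and a monotone function with this distribution is `x ↦ x/4`; hence `E` is a function of `D` for
`W₁`, and then also for `W`. But for `0 < u < 1/2` the points `u` and `u + 1/2` have the same
`W`-degree `u/2`, while their two-path densities `u/12` and `u(1-u)/8` differ unless `u = 1/3`.
-/

open MeasureTheory Set

/-- A graphon on `[0,1]` (represented as a function on all of `ℝ`):
a symmetric measurable function with values in `[0,1]`. -/
def IsGraphon (U : ℝ → ℝ → ℝ) : Prop :=
  Measurable (Function.uncurry U) ∧ (∀ x y, U x y = U y x) ∧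
    ∀ x y, U x y ∈ Set.Icc (0:ℝ) 1

noncomputable def W (x y : ℝ) : ℝ :=
  if x ∈ Set.Ioo (0:ℝ) (1/2) ∧ y ∈ Set.Ioo (0:ℝ) (1/2) then 4 * x * y
  else if x + y > 3/2 then 1/2 else 0

section PullBack

variable {Ω α β : Type*} [MeasurableSpace Ω] [MeasurableSpace α] [MeasurableSpace β]
  {μ : Measure Ω} {ν : Measure α} {φ ψ : Ω → α}

theorem MeasureTheory.MeasurePreserving.integral_comp_of_measurable
    (hφ : MeasurePreserving φ μ ν) {F : α → ℝ} (hF : Measurable F) :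
    ∫ x, F (φ x) ∂μ = ∫ y, F y ∂ν := by
  rw [← hφ.map_eq, integral_map hφ.aemeasurable hF.aestronglyMeasurable]

theorem ae_integral_mul_eq_of_ae_prod_eq [SFinite μ]
    (hφ : MeasurePreserving φ μ ν) (hψ : MeasurePreserving ψ μ ν)
    {U U₁ : α → α → ℝ} (hU : Measurable (Function.uncurry U))
    (hU₁ : Measurable (Function.uncurry U₁)) {f g : α → ℝ} (hf : Measurable f)
    (hg : Measurable g) (hfg : ∀ᵐ y ∂μ, f (φ y) = g (ψ y))
    (hUU₁ : ∀ᵐ p ∂μ.prod μ, U (φ p.1) (φ p.2) = U₁ (ψ p.1) (ψ p.2)) :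
    ∀ᵐ x ∂μ, ∫ y, U (φ x) y * f y ∂ν = ∫ y, U₁ (ψ x) y * g y ∂ν := by
  filter_upwards [Measure.ae_ae_of_ae_prod hUU₁] with x hx
  rw [← hφ.integral_comp_of_measurable (F := fun y => U (φ x) y * f y)
      ((hU.comp measurable_prodMk_left).mul hf),
    ← hψ.integral_comp_of_measurable (F := fun y => U₁ (ψ x) y * g y)
      ((hU₁.comp measurable_prodMk_left).mul hg)]
  refine integral_congr_ae ?_
  filter_upwards [hx, hfg] with y hUy hfy
  simp only [hUy, hfy]

theorem map_eq_map_of_ae_comp_eq (hφ : MeasurePreserving φ μ ν) (hψ : MeasurePreserving ψ μ ν)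
    {f g : α → β} (hf : Measurable f) (hg : Measurable g) (hfg : ∀ᵐ x ∂μ, f (φ x) = g (ψ x)) :
    ν.map f = ν.map g := by
  calc ν.map f = (μ.map φ).map f := by rw [hφ.map_eq]
    _ = (μ.map ψ).map g := by
      rw [Measure.map_map hf hφ.measurable, Measure.map_map hg hψ.measurable]
      exact Measure.map_congr hfg
    _ = ν.map g := by rw [hψ.map_eq]

end PullBack

theorem ae_of_map_eq_map {α β : Type*} [MeasurableSpace α] [MeasurableSpace β] {ν : Measure α}
    {f g : α → β} (hf : AEMeasurable f ν) (hg : AEMeasurable g ν) (hfg : ν.map f = ν.map g)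
    {p : β → Prop} (hp : MeasurableSet {z | p z}) (h : ∀ᵐ u ∂ν, p (g u)) :
    ∀ᵐ u ∂ν, p (f u) := by
  rwa [← ae_map_iff hf hp, hfg, ae_map_iff hg hp]

theorem map_restrict_apply_Iic {α : Type*} [MeasurableSpace α] {μ : Measure α} {s : Set α}
    (hs : MeasurableSet s) {f : α → ℝ} (hf : Measurable f) (d : ℝ) :
    (μ.restrict s).map f (Iic d) = μ {u ∈ s | f u ≤ d} := by
  rw [Measure.map_apply hf measurableSet_Iic, Measure.restrict_apply' hs, inter_comm]
  rfl

section MonotoneDistribution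

variable {f : ℝ → ℝ} {x d : ℝ}

theorem volume_sublevel_le_of_lt_apply (hf : MonotoneOn f (Icc 0 1)) (hx : x ∈ Icc 0 1)
    (hd : d < f x) : volume {u ∈ Icc (0:ℝ) 1 | f u ≤ d} ≤ ENNReal.ofReal x := by
  calc volume {u ∈ Icc (0:ℝ) 1 | f u ≤ d} ≤ volume (Icc 0 x) :=
        measure_mono fun u ⟨hu, hfu⟩ =>
          ⟨hu.1, not_lt.1 fun hxu => (hd.trans_le (hf hx hu hxu.le)).not_ge hfu⟩
    _ = ENNReal.ofReal x := by rw [Real.volume_Icc, sub_zero]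

theorem ofReal_le_volume_sublevel_of_apply_le (hf : MonotoneOn f (Icc 0 1)) (hx : x ∈ Icc 0 1)
    (hd : f x ≤ d) : ENNReal.ofReal x ≤ volume {u ∈ Icc (0:ℝ) 1 | f u ≤ d} := by
  calc ENNReal.ofReal x = volume (Icc 0 x) := by rw [Real.volume_Icc, sub_zero]
    _ ≤ volume {u ∈ Icc (0:ℝ) 1 | f u ≤ d} :=
        measure_mono fun u hu =>
          ⟨⟨hu.1, hu.2.trans hx.2⟩, (hf ⟨hu.1, hu.2.trans hx.2⟩ hx hu.2).trans hd⟩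

theorem MonotoneOn.eq_mul_of_volume_sublevel (hf : MonotoneOn f (Icc 0 1)) {c : ℝ} (hc : 0 < c)
    (hvol : ∀ d ∈ Ioo 0 c, volume {u ∈ Icc (0:ℝ) 1 | f u ≤ d} = ENNReal.ofReal (d / c))
    (hx : x ∈ Ioo 0 1) : f x = c * x := by
  have hx' := Ioo_subset_Icc_self hx
  have hcx : c * x < c := mul_lt_of_lt_one_right hc hx.2
  refine le_antisymm (not_lt.1 fun hlt => ?_) (not_lt.1 fun hlt => ?_)
  · obtain ⟨d, hxd, hd⟩ := exists_between (lt_min hlt hcx)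
    have := (hvol d ⟨(mul_pos hc hx.1).trans hxd, hd.trans_le (min_le_right _ _)⟩).symm.trans_le
      (volume_sublevel_le_of_lt_apply hf hx' (hd.trans_le (min_le_left _ _)))
    rw [ENNReal.ofReal_le_ofReal_iff hx'.1, div_le_iff₀ hc] at this
    linarith
  · obtain ⟨d, hd, hdx⟩ := exists_between (max_lt hlt (mul_pos hc hx.1))
    have := (ofReal_le_volume_sublevel_of_apply_le hf hx' ((le_max_left _ _).trans hd.le)).trans
      (hvol d ⟨(le_max_right _ _).trans_lt hd, hdx.trans hcx⟩).le
    rw [ENNReal.ofReal_le_ofReal_iff (div_nonneg ((le_max_right _ _).trans hd.le) hc.le),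
      le_div_iff₀ hc] at this
    linarith

end MonotoneDistribution

theorem setIntegral_Icc_indicator_Ioo {a b : ℝ} (ha : 0 ≤ a) (hab : a ≤ b) (hb : b ≤ 1)
    (g : ℝ → ℝ) : ∫ y in Icc (0:ℝ) 1, (Ioo a b).indicator g y = ∫ y in a..b, g y := by
  rw [setIntegral_indicator measurableSet_Ioo,
    inter_eq_right.2 (Ioo_subset_Icc_self.trans (Icc_subset_Icc ha hb)),
    intervalIntegral.integral_of_le hab, integral_Ioc_eq_integral_Ioo]

theorem setIntegral_Icc_indicator_Ioi {a : ℝ} (ha : 0 ≤ a) (ha1 : a ≤ 1) (g : ℝ → ℝ) :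
    ∫ y in Icc (0:ℝ) 1, (Ioi a).indicator g y = ∫ y in a..1, g y := by
  have hIoc : Icc (0:ℝ) 1 ∩ Ioi a = Ioc a 1 := by
    ext y
    simp only [mem_inter_iff, mem_Icc, mem_Ioi, mem_Ioc]
    constructor
    · rintro ⟨⟨-, h1⟩, ha⟩; exact ⟨ha, h1⟩
    · rintro ⟨ha', h1⟩; exact ⟨⟨by linarith, h1⟩, ha'⟩
  rw [setIntegral_indicator measurableSet_Ioi, hIoc, intervalIntegral.integral_of_le ha1]

namespace Graphon

noncomputable def degree (U : ℝ → ℝ → ℝ) (x : ℝ) : ℝ := ∫ y in Icc (0:ℝ) 1, U x y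

noncomputable def degree₂ (U : ℝ → ℝ → ℝ) (x : ℝ) : ℝ := ∫ y in Icc (0:ℝ) 1, U x y * degree U y

variable {U : ℝ → ℝ → ℝ}

theorem measurable_degree (hU : Measurable (Function.uncurry U)) : Measurable (degree U) :=
  (hU.stronglyMeasurable.integral_prod_right' (ν := volume.restrict (Icc 0 1))).measurable

theorem measurable_degree₂ (hU : Measurable (Function.uncurry U)) : Measurable (degree₂ U) :=
  ((hU.mul ((measurable_degree hU).comp measurable_snd)).stronglyMeasurable.integral_prod_right'
    (ν := volume.restrict (Icc 0 1))).measurable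

theorem measurable_uncurry_W : Measurable (Function.uncurry W) := by
  refine Measurable.ite (measurableSet_Ioo.prod measurableSet_Ioo)
    ((measurable_const.mul measurable_fst).mul measurable_snd)
    (Measurable.ite (measurableSet_lt measurable_const (measurable_fst.add measurable_snd))
      measurable_const measurable_const)

theorem W_of_lt_half {u y : ℝ} (hu : u ∈ Ico (0:ℝ) (1/2)) (hy : y ≤ 1) :
    W u y = (Ioo (0:ℝ) (1/2)).indicator (fun y => 4 * u * y) y := by
  have hsum : ¬ u + y > 3/2 := by linarith [hu.2]
  rw [W, if_neg hsum]
  by_cases h : y ∈ Ioo (0:ℝ) (1/2)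
  · rw [indicator_of_mem h]
    rcases hu.1.eq_or_lt with rfl | hu0
    · simp
    · rw [if_pos ⟨⟨hu0, hu.2⟩, h⟩]
  · rw [indicator_of_notMem h, if_neg fun hc => h hc.2]

theorem W_of_half_le {u : ℝ} (hu : 1/2 ≤ u) (y : ℝ) :
    W u y = (Ioi (3/2 - u)).indicator (fun _ => 1/2) y := by
  have hu' : u ∉ Ioo (0:ℝ) (1/2) := fun h => h.2.not_ge hu
  simp only [W, hu', false_and, if_false, indicator_apply, mem_Ioi, gt_iff_lt, sub_lt_iff_lt_add,
    add_comm y]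

theorem degree_W_of_lt_half {u : ℝ} (hu : u ∈ Ico (0:ℝ) (1/2)) : degree W u = u / 2 := by
  rw [degree, setIntegral_congr_fun measurableSet_Icc fun y hy => W_of_lt_half hu hy.2,
    setIntegral_Icc_indicator_Ioo le_rfl (by norm_num) (by norm_num),
    intervalIntegral.integral_const_mul, integral_id]
  ring

theorem degree_W_of_half_le {u : ℝ} (hu : u ∈ Icc (1/2:ℝ) 1) : degree W u = (u - 1/2) / 2 := by
  rw [degree, setIntegral_congr_fun measurableSet_Icc fun y _ => W_of_half_le hu.1 y,
    setIntegral_Icc_indicator_Ioi (by linarith [hu.2]) (by linarith [hu.1]),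
    intervalIntegral.integral_const]
  simp only [smul_eq_mul]
  ring

theorem degree₂_W_of_lt_half {u : ℝ} (hu : u ∈ Ioo (0:ℝ) (1/2)) : degree₂ W u = u / 12 := by
  have hrow : EqOn (fun y => W u y * degree W y)
      ((Ioo (0:ℝ) (1/2)).indicator fun y => 2 * u * y ^ 2) (Icc 0 1) := by
    intro y hy
    simp only [W_of_lt_half (Ioo_subset_Ico_self hu) hy.2, indicator_apply]
    split_ifs with h
    · rw [degree_W_of_lt_half (Ioo_subset_Ico_self h)]; ring
    · rw [zero_mul]
  rw [degree₂, setIntegral_congr_fun measurableSet_Icc hrow,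
    setIntegral_Icc_indicator_Ioo le_rfl (by norm_num) (by norm_num),
    intervalIntegral.integral_const_mul, integral_pow]
  ring

theorem degree₂_W_of_half_lt {u : ℝ} (hu : u ∈ Ioo (1/2:ℝ) 1) :
    degree₂ W u = (3/2 - u) * (u - 1/2) / 8 := by
  have hrow : EqOn (fun y => W u y * degree W y)
      ((Ioi (3/2 - u)).indicator fun y => (y - 1/2) / 4) (Icc 0 1) := by
    intro y hy
    simp only [W_of_half_le hu.1.le, indicator_apply, mem_Ioi]
    split_ifs with h
    · rw [degree_W_of_half_le ⟨by linarith [hu.2], hy.2⟩]; ring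
    · rw [zero_mul]
  rw [degree₂, setIntegral_congr_fun measurableSet_Icc hrow,
    setIntegral_Icc_indicator_Ioi (by linarith [hu.2]) (by linarith [hu.1]),
    intervalIntegral.integral_div,
    intervalIntegral.integral_sub intervalIntegral.intervalIntegrable_id intervalIntegrable_const,
    integral_id, intervalIntegral.integral_const]
  simp only [smul_eq_mul]
  ring

theorem volume_sublevel_degree_W {d : ℝ} (hd : d ∈ Ioo (0:ℝ) (1/4)) :
    volume {u ∈ Icc (0:ℝ) 1 | degree W u ≤ d} = ENNReal.ofReal (4 * d) := by
  have hset : {u ∈ Icc (0:ℝ) 1 | degree W u ≤ d} = Icc 0 (2 * d) ∪ Icc (1/2) (1/2 + 2 * d) := by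
    ext u
    simp only [mem_ofPred_eq, mem_union, mem_Icc]
    by_cases hu : u ∈ Icc (0:ℝ) 1
    · rcases lt_or_ge u (1/2) with h | h
      · rw [degree_W_of_lt_half ⟨hu.1, h⟩]
        constructor
        · intro hu'; left; constructor <;> linarith
        · rintro (hu' | hu') <;> constructor <;> first | exact hu | linarith
      · rw [degree_W_of_half_le ⟨h, hu.2⟩]
        constructor
        · intro hu'; right; constructor <;> linarith
        · rintro (hu' | hu') <;> constructor <;> first | exact hu | linarith
    · rw [mem_Icc] at hu
      constructor
      · rintro ⟨hu', -⟩; exact absurd hu' hu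
      · rintro (hu' | hu') <;> exact absurd ⟨by linarith, by linarith [hd.2]⟩ hu
  have hdisj : Disjoint (Icc (0:ℝ) (2 * d)) (Icc (1/2) (1/2 + 2 * d)) :=
    disjoint_left.2 fun u hu hu' => by linarith [hu.2, hu'.1, hd.2]
  rw [hset, measure_union hdisj measurableSet_Icc, Real.volume_Icc, Real.volume_Icc,
    ← ENNReal.ofReal_add (by linarith [hd.1]) (by linarith [hd.1])]
  ring_nf

theorem not_ae_degree₂_W_eq_comp_degree (h : ℝ → ℝ) :
    ¬ ∀ᵐ u ∂volume.restrict (Icc (0:ℝ) 1), degree₂ W u = h (degree W u) := by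
  intro hae
  rw [ae_restrict_iff' measurableSet_Icc] at hae
  have hshift := (measurePreserving_add_right volume (1/2:ℝ)).quasiMeasurePreserving.ae hae
  have : (ae (volume.restrict (Ioo (0:ℝ) (1/4)))).NeBot := ae_restrict_neBot.2 (by simp)
  obtain ⟨u, hu, hlow, hhigh⟩ :=
    ((ae_restrict_mem (μ := volume) (measurableSet_Ioo (a := (0:ℝ)) (b := 1/4))).and
      (ae_restrict_of_ae (hae.and hshift))).exists
  simp only [mem_Ioo, mem_Icc] at hu hlow hhigh
  have hdeg : degree W (u + 1/2) = degree W u := by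
    rw [degree_W_of_lt_half ⟨hu.1.le, by linarith⟩, degree_W_of_half_le ⟨by linarith, by linarith⟩]
    ring
  have hdeg₂ := (hlow ⟨hu.1.le, by linarith⟩).trans
    ((congrArg h hdeg.symm).trans (hhigh ⟨by linarith, by linarith⟩).symm)
  rw [degree₂_W_of_lt_half ⟨hu.1, by linarith⟩, degree₂_W_of_half_lt ⟨by linarith, by linarith⟩]
    at hdeg₂
  nlinarith

end Graphon

open Graphon in
/-- There is no graphon equivalent to `W` (in the sense of a common pull-back)
whose degree function is weakly increasing. -/
theorem stmt11 :
    ¬ ∃ (W₁ : ℝ → ℝ → ℝ), IsGraphon W₁ ∧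
      MonotoneOn (fun x => ∫ y in Set.Icc (0:ℝ) 1, W₁ x y) (Set.Icc (0:ℝ) 1) ∧
      ∃ (Ω : Type) (_ : MeasurableSpace Ω) (μ : Measure Ω), IsProbabilityMeasure μ ∧
        ∃ (φ ψ : Ω → ℝ),
          MeasurePreserving φ μ (volume.restrict (Set.Icc (0:ℝ) 1)) ∧
          MeasurePreserving ψ μ (volume.restrict (Set.Icc (0:ℝ) 1)) ∧
          ∀ᵐ p ∂(μ.prod μ), W (φ p.1) (φ p.2) = W₁ (ψ p.1) (ψ p.2) := by
  rintro ⟨W₁, ⟨hW₁, -, -⟩, hmono, Ω, _, μ, _, φ, ψ, hφ, hψ, hpull⟩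
  have hW := measurable_uncurry_W
  have hdeg : ∀ᵐ x ∂μ, degree W (φ x) = degree W₁ (ψ x) :=
    (ae_integral_mul_eq_of_ae_prod_eq hφ hψ hW hW₁ measurable_one measurable_one
      (.of_forall fun _ => rfl) hpull).mono fun _ h => by
        simp only [Pi.one_apply, mul_one] at h; exact h
  have hdeg₂ : ∀ᵐ x ∂μ, degree₂ W (φ x) = degree₂ W₁ (ψ x) :=
    ae_integral_mul_eq_of_ae_prod_eq hφ hψ hW hW₁ (measurable_degree hW) (measurable_degree hW₁)
      hdeg hpull
  have hdeg₁ : ∀ x ∈ Ioo (0:ℝ) 1, degree W₁ x = 1/4 * x := fun x hx =>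
    MonotoneOn.eq_mul_of_volume_sublevel (f := degree W₁) hmono (by norm_num) (fun d hd => by
      rw [← map_restrict_apply_Iic measurableSet_Icc (measurable_degree hW₁),
        ← map_eq_map_of_ae_comp_eq hφ hψ (measurable_degree hW) (measurable_degree hW₁) hdeg,
        map_restrict_apply_Iic measurableSet_Icc (measurable_degree hW),
        volume_sublevel_degree_W hd]
      ring_nf) hx
  have hP := (measurable_degree hW).prodMk (measurable_degree₂ hW)
  have hP₁ := (measurable_degree hW₁).prodMk (measurable_degree₂ hW₁)
  have hdist := map_eq_map_of_ae_comp_eq hφ hψ hP hP₁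
    ((hdeg.and hdeg₂).mono fun _ h => Prod.ext h.1 h.2)
  have hgraph : MeasurableSet {z : ℝ × ℝ | z.2 = degree₂ W₁ (4 * z.1)} :=
    measurableSet_eq_fun measurable_snd
      ((measurable_degree₂ hW₁).comp (measurable_const.mul measurable_fst))
  refine not_ae_degree₂_W_eq_comp_degree (fun t => degree₂ W₁ (4 * t))
    (ae_of_map_eq_map hP.aemeasurable hP₁.aemeasurable hdist hgraph ?_)
  rw [← Measure.restrict_congr_set Ioo_ae_eq_Icc]
  filter_upwards [ae_restrict_mem measurableSet_Ioo] with u hu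
  rw [hdeg₁ u hu]
  ring_nf
end

section
/- Let W be a graphon on [0,1] whose degree function D(x) = ∫₀¹ W(x,y) dy is strictly increasing, and let W₁ be a graphon on [0,1] with increasing degree function D₁ such that there exist a probability space (Ω,μ) and measure-preserving maps φ, ψ : Ω → [0,1] with D(φ(x)) = D₁(ψ(x)) for μ-a.e. x. Then D₁ = D almost everywhere on [0,1]. -/
open MeasureTheory Set

/-! Since `φ` and `ψ` are measure-preserving and `D ∘ φ = D₁ ∘ ψ` a.e., the sublevel sets
`{D ≤ t}` and `{D₁ ≤ t}` have the same measure in `[0, 1]`. A monotone function on `[a, b]` is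
determined a.e. by these measures: if `f x ≤ t < g x` with `t` rational, monotonicity squeezes
`x - a` to equal `|{f ≤ t} ∩ [a, b]|`, which happens for only countably many `x`. -/

theorem MeasureTheory.MeasurePreserving.measure_preimage_eq_of_comp_ae_eq {Ω α β : Type*}
    [MeasurableSpace Ω] [MeasurableSpace α] {μ : Measure Ω} {ν : Measure α}
    {φ ψ : Ω → α} {f g : α → β} (hφ : MeasurePreserving φ μ ν) (hψ : MeasurePreserving ψ μ ν)
    (h : f ∘ φ =ᵐ[μ] g ∘ ψ) {s : Set β} (hfs : NullMeasurableSet (f ⁻¹' s) ν)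
    (hgs : NullMeasurableSet (g ⁻¹' s) ν) : ν (f ⁻¹' s) = ν (g ⁻¹' s) := by
  rw [← hφ.measure_preimage hfs, ← hψ.measure_preimage hgs]
  exact measure_congr (h.preimage s)

section MonotoneOn

variable {f g : ℝ → ℝ} {a b x t : ℝ}

theorem MonotoneOn.ofReal_sub_le_volume_sublevel (hf : MonotoneOn f (Icc a b))
    (hx : x ∈ Icc a b) (hfx : f x ≤ t) :
    ENNReal.ofReal (x - a) ≤ volume (f ⁻¹' Iic t ∩ Icc a b) := by
  rw [← Real.volume_Icc]
  refine measure_mono fun z hz => ⟨?_, hz.1, hz.2.trans hx.2⟩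
  exact (hf ⟨hz.1, hz.2.trans hx.2⟩ hx hz.2).trans hfx

theorem MonotoneOn.volume_sublevel_le_ofReal_sub (hf : MonotoneOn f (Icc a b))
    (hx : x ∈ Icc a b) (hfx : t < f x) :
    volume (f ⁻¹' Iic t ∩ Icc a b) ≤ ENNReal.ofReal (x - a) := by
  rw [← Real.volume_Ico]
  refine measure_mono fun z ⟨hzt, hz⟩ => ⟨hz.1, lt_of_not_ge fun hxz => ?_⟩
  exact (hfx.trans_le (hf hx hz hxz)).not_ge hzt

theorem MonotoneOn.exists_rat_ofReal_sub_eq_volume_sublevel (hf : MonotoneOn f (Icc a b))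
    (hg : MonotoneOn g (Icc a b))
    (h : ∀ t, volume (f ⁻¹' Iic t ∩ Icc a b) = volume (g ⁻¹' Iic t ∩ Icc a b))
    (hx : x ∈ Icc a b) (hfg : f x < g x) :
    ∃ q : ℚ, ENNReal.ofReal (x - a) = volume (f ⁻¹' Iic (q : ℝ) ∩ Icc a b) := by
  obtain ⟨q, hfq, hqg⟩ := exists_rat_btwn hfg
  refine ⟨q, le_antisymm (hf.ofReal_sub_le_volume_sublevel hx hfq.le) ?_⟩
  exact (h q).trans_le (hg.volume_sublevel_le_ofReal_sub hx hqg)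

theorem MonotoneOn.ae_eq_of_volume_sublevel_eq (hf : MonotoneOn f (Icc a b))
    (hg : MonotoneOn g (Icc a b))
    (h : ∀ t, volume (f ⁻¹' Iic t ∩ Icc a b) = volume (g ⁻¹' Iic t ∩ Icc a b)) :
    ∀ᵐ x ∂volume.restrict (Icc a b), f x = g x := by
  set N := range fun q : ℚ => (volume (f ⁻¹' Iic (q : ℝ) ∩ Icc a b)).toReal + a
  have hN : ∀ᵐ x, x ∉ N := measure_eq_zero_iff_ae_notMem.mp ((countable_range _).measure_zero _)
  rw [ae_restrict_iff' measurableSet_Icc]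
  filter_upwards [hN] with x hxN hx
  have mem_N : ∀ q : ℚ, ENNReal.ofReal (x - a) = volume (f ⁻¹' Iic (q : ℝ) ∩ Icc a b) →
      x ∈ N := fun q hq => ⟨q, by simp [← hq, ENNReal.toReal_ofReal, sub_nonneg.mpr hx.1]⟩
  rcases lt_trichotomy (f x) (g x) with hfg | hfg | hgf
  · obtain ⟨q, hq⟩ := hf.exists_rat_ofReal_sub_eq_volume_sublevel hg h hx hfg
    exact absurd (mem_N q hq) hxN
  · exact hfg
  · obtain ⟨q, hq⟩ := hg.exists_rat_ofReal_sub_eq_volume_sublevel hf (fun t => (h t).symm) hx hgf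
    exact absurd (mem_N q (hq.trans (h q).symm)) hxN

end MonotoneOn

theorem stmt12_general {Ω : Type*} [MeasurableSpace Ω] (μ : Measure Ω)
    (D D₁ : ℝ → ℝ)
    (hDstrict : StrictMonoOn D (Set.Icc (0:ℝ) 1))
    (hD₁mono : MonotoneOn D₁ (Set.Icc (0:ℝ) 1))
    (φ ψ : Ω → ℝ)
    (hφ : MeasurePreserving φ μ (volume.restrict (Set.Icc (0:ℝ) 1)))
    (hψ : MeasurePreserving ψ μ (volume.restrict (Set.Icc (0:ℝ) 1)))
    (heq : ∀ᵐ x ∂μ, D (φ x) = D₁ (ψ x)) :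
    ∀ᵐ x ∂(volume.restrict (Set.Icc (0:ℝ) 1)), D₁ x = D x := by
  have hDmono := hDstrict.monotoneOn
  have hsublevel : ∀ t, volume (D ⁻¹' Iic t ∩ Icc 0 1) = volume (D₁ ⁻¹' Iic t ∩ Icc 0 1) :=
    fun t => by
      simpa only [Measure.restrict_apply' measurableSet_Icc] using
        hφ.measure_preimage_eq_of_comp_ae_eq hψ heq
          ((aemeasurable_restrict_of_monotoneOn measurableSet_Icc hDmono).nullMeasurableSet_preimage
            measurableSet_Iic)
          ((aemeasurable_restrict_of_monotoneOn measurableSet_Icc hD₁mono).nullMeasurableSet_preimage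
            measurableSet_Iic)
  filter_upwards [hDmono.ae_eq_of_volume_sublevel_eq hD₁mono hsublevel] with x hx
  exact hx.symm

theorem stmt12 {Ω : Type*} [MeasurableSpace Ω] (μ : Measure Ω) [IsProbabilityMeasure μ]
    (W W₁ : ℝ → ℝ → ℝ) (hW : IsGraphon W) (hW₁ : IsGraphon W₁)
    (D D₁ : ℝ → ℝ)
    (hD : ∀ x, D x = ∫ y in Set.Icc (0:ℝ) 1, W x y)
    (hD₁ : ∀ x, D₁ x = ∫ y in Set.Icc (0:ℝ) 1, W₁ x y)
    (hDstrict : StrictMonoOn D (Set.Icc (0:ℝ) 1))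
    (hD₁mono : MonotoneOn D₁ (Set.Icc (0:ℝ) 1))
    (φ ψ : Ω → ℝ)
    (hφ : MeasurePreserving φ μ (volume.restrict (Set.Icc (0:ℝ) 1)))
    (hψ : MeasurePreserving ψ μ (volume.restrict (Set.Icc (0:ℝ) 1)))
    (heq : ∀ᵐ x ∂μ, D (φ x) = D₁ (ψ x)) :
    ∀ᵐ x ∂(volume.restrict (Set.Icc (0:ℝ) 1)), D₁ x = D x :=
  stmt12_general μ D D₁ hDstrict hD₁mono φ ψ hφ hψ heq
end

section
/- Let W, W₁ be graphons on [0,1] with degree functions D, D₁, let (Ω,μ) be a probability space and φ, ψ : Ω → [0,1] measure-preserving maps such that W(φ(x),φ(y)) = W₁(ψ(x),ψ(y)) for μ²-a.e. (x,y). Suppose D₁(x) = x/4 a.e. and h(φ(x)) = h₁(ψ(x)) μ-a.e., where h, h₁ are defined by h(x) = Leb{y : W(x,y) ∉ {0,1/2}} and similarly for h₁. Then for all 0 < a < b < 1, ∫_a^b h₁(x) dx = ∫₀¹ h(x)·𝟙[a/4 < D(x) < b/4] dx. -/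
/-!
Pulling back along `φ` and `ψ`, the a.e. identity `W ∘ (φ × φ) = W₁ ∘ (ψ × ψ)` gives
`D (φ x) = D₁ (ψ x) = ψ x / 4` for a.e. `x`. Hence `φ x` lies in `{a/4 < D < b/4}` exactly
when `ψ x ∈ (a, b)`, and together with `h (φ x) = h₁ (ψ x)` both sides of the claim become
the integral over `μ` of the same function.
-/

open MeasureTheory Set

namespace MeasureTheory

theorem measurable_measure_setOf_slice_notMem {α β γ : Type*} [MeasurableSpace α]
    [MeasurableSpace β] [MeasurableSpace γ] {U : α → β → γ}
    (hU : Measurable (Function.uncurry U)) (ν : Measure β) [SFinite ν] {s : Set β} {t : Set γ}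
    (hs : MeasurableSet s) (ht : MeasurableSet t) : Measurable fun x => ν {y ∈ s | U x y ∉ t} :=
  measurable_measure_prodMk_left ((measurable_snd hs).inter (hU ht.compl))

section PullBack

variable {Ω α : Type*} [MeasurableSpace Ω] [MeasurableSpace α]
  {μ : Measure Ω} {ν : Measure α}
  {E : Type*} [NormedAddCommGroup E] [NormedSpace ℝ E] {φ ψ : Ω → α}

theorem MeasurePreserving.integral_comp_of_aestronglyMeasurable
    (hφ : MeasurePreserving φ μ ν) {f : α → E} (hf : AEStronglyMeasurable f ν) :
    ∫ x, f (φ x) ∂μ = ∫ x, f x ∂ν := by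
  rw [← hφ.map_eq] at hf ⊢
  exact (integral_map hφ.measurable.aemeasurable hf).symm

theorem integral_eq_of_comp_ae_eq (hφ : MeasurePreserving φ μ ν)
    (hψ : MeasurePreserving ψ μ ν) {f g : α → E} (hf : AEStronglyMeasurable f ν)
    (hg : AEStronglyMeasurable g ν) (hfg : f ∘ φ =ᵐ[μ] g ∘ ψ) : ∫ x, f x ∂ν = ∫ x, g x ∂ν := by
  rw [← hφ.integral_comp_of_aestronglyMeasurable hf,
    ← hψ.integral_comp_of_aestronglyMeasurable hg]
  exact integral_congr_ae hfg

theorem ae_integral_slice_eq_of_ae_prod [SFinite μ] (hφ : MeasurePreserving φ μ ν)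
    (hψ : MeasurePreserving ψ μ ν) {U V : α → α → E}
    (hU : ∀ x, AEStronglyMeasurable (U x) ν) (hV : ∀ x, AEStronglyMeasurable (V x) ν)
    (hUV : ∀ᵐ p ∂μ.prod μ, U (φ p.1) (φ p.2) = V (ψ p.1) (ψ p.2)) :
    ∀ᵐ x ∂μ, ∫ y, U (φ x) y ∂ν = ∫ y, V (ψ x) y ∂ν := by
  filter_upwards [Measure.ae_ae_of_ae_prod hUV] with x hx
  exact integral_eq_of_comp_ae_eq hφ hψ (hU _) (hV _) hx

end PullBack

end MeasureTheory

theorem intervalIntegral_eq_setIntegral_indicator_Ioo {E : Type*} [NormedAddCommGroup E]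
    [NormedSpace ℝ E] {f : ℝ → E} {a b : ℝ} {s : Set ℝ}
    (hab : a ≤ b) (hs : Ioo a b ⊆ s) :
    ∫ x in a..b, f x = ∫ x in s, (Ioo a b).indicator f x := by
  rw [intervalIntegral.integral_of_le hab, integral_Ioc_eq_integral_Ioo,
    integral_indicator measurableSet_Ioo, Measure.restrict_restrict measurableSet_Ioo,
    inter_eq_left.mpr hs]

theorem stmt17 {Ω : Type*} [MeasurableSpace Ω] (μ : Measure Ω) [IsProbabilityMeasure μ]
    (W W₁ : ℝ → ℝ → ℝ) (hW : IsGraphon W) (hW₁ : IsGraphon W₁)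
    (D D₁ : ℝ → ℝ)
    (hD : ∀ x, D x = ∫ y in Set.Icc (0:ℝ) 1, W x y)
    (hD₁ : ∀ x, D₁ x = ∫ y in Set.Icc (0:ℝ) 1, W₁ x y)
    (h h₁ : ℝ → ℝ)
    (hh : ∀ x, h x = (volume {y ∈ Set.Icc (0:ℝ) 1 | W x y ∉ ({0, 1/2} : Set ℝ)}).toReal)
    (hh₁ : ∀ x, h₁ x = (volume {y ∈ Set.Icc (0:ℝ) 1 | W₁ x y ∉ ({0, 1/2} : Set ℝ)}).toReal)
    (φ ψ : Ω → ℝ)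
    (hφ : MeasurePreserving φ μ (volume.restrict (Set.Icc (0:ℝ) 1)))
    (hψ : MeasurePreserving ψ μ (volume.restrict (Set.Icc (0:ℝ) 1)))
    (heq : ∀ᵐ p ∂(μ.prod μ), W (φ p.1) (φ p.2) = W₁ (ψ p.1) (ψ p.2))
    (hD₁eq : ∀ᵐ x ∂(volume.restrict (Set.Icc (0:ℝ) 1)), D₁ x = x / 4)
    (hheq : ∀ᵐ x ∂μ, h (φ x) = h₁ (ψ x)) :
    ∀ a b : ℝ, 0 < a → a < b → b < 1 →
      ∫ x in a..b, h₁ x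
        = ∫ x in Set.Icc (0:ℝ) 1,
            h x * Set.indicator {x : ℝ | a/4 < D x ∧ D x < b/4} (fun _ => (1:ℝ)) x := by
  intro a b ha hab hb
  have hDm : Measurable D := funext hD ▸ hW.1.stronglyMeasurable.integral_prod_right'.measurable
  have hpair : MeasurableSet ({0, 1/2} : Set ℝ) := (Set.toFinite _).measurableSet
  have hhm : Measurable h := funext hh ▸
    (measurable_measure_setOf_slice_notMem hW.1 _ measurableSet_Icc hpair).ennreal_toReal
  have hh₁m : Measurable h₁ := funext hh₁ ▸
    (measurable_measure_setOf_slice_notMem hW₁.1 _ measurableSet_Icc hpair).ennreal_toReal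
  set S := {x : ℝ | a/4 < D x ∧ D x < b/4}
  have hSm : MeasurableSet S :=
    (measurableSet_lt measurable_const hDm).inter (measurableSet_lt hDm measurable_const)
  have hDφ : ∀ᵐ x ∂μ, D (φ x) = ψ x / 4 := by
    filter_upwards [ae_integral_slice_eq_of_ae_prod (U := W) (V := W₁) hφ hψ
      (fun _ => hW.1.of_uncurry_left.aestronglyMeasurable)
      (fun _ => hW₁.1.of_uncurry_left.aestronglyMeasurable) heq,
      hψ.quasiMeasurePreserving.ae hD₁eq] with x hx hx₁
    rw [hD, hx, ← hD₁, hx₁]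
  have hindicator : ∀ᵐ x ∂μ, S.indicator h (φ x) = (Ioo a b).indicator h₁ (ψ x) := by
    filter_upwards [hheq, hDφ] with x hhx hDx
    have hmem : φ x ∈ S ↔ ψ x ∈ Ioo a b := by
      simp only [S, mem_ofPred_eq, mem_Ioo, hDx,
        div_lt_div_iff_of_pos_right (four_pos : (0:ℝ) < 4)]
    simp only [indicator_apply, hmem, hhx]
  calc ∫ x in a..b, h₁ x
      = ∫ x in Icc (0:ℝ) 1, (Ioo a b).indicator h₁ x :=
        intervalIntegral_eq_setIntegral_indicator_Ioo hab.le
          (Ioo_subset_Icc_self.trans (Icc_subset_Icc ha.le hb.le))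
    _ = ∫ x in Icc (0:ℝ) 1, S.indicator h x :=
        (integral_eq_of_comp_ae_eq hφ hψ (hhm.indicator hSm).aestronglyMeasurable
          (hh₁m.indicator measurableSet_Ioo).aestronglyMeasurable hindicator).symm
    _ = _ := by simp only [← indicator_mul_right, mul_one]
end
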